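/- arXiv:1301.6021 — 9 statements merged into one kernel-verified Lean document; each statement's English description precedes it below -/
import Mathlib

section
/- Let q be a prime power, K a finite field with q elements, L a degree-2 field extension of K, ℓ an odd prime dividing q+1, and η ∈ L with η^(q+1) = 1 and η^((q+1)/ℓ) ≠ 1. Let α ∈ K be the element with algebraMap K L α = η + η⁻¹. Then for every i ≥ 0, the polynomial P_{ℓ^i} − C α ∈ K[X] is irreducible (where P_n is the Dickson polynomial of the first kind with parameter 1). -/
set_option maxHeartbeats 1000000

open Polynomial

private lemma monic_sub_aux {R : Type*} [CommRing R] {A B : R[X]} (hA : A.Monic)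
    (h : B.natDegree < A.natDegree) : (A - B).Monic ∧ (A - B).natDegree = A.natDegree := by
  have hd := natDegree_sub_eq_left_of_natDegree_lt h
  refine ⟨?_, hd⟩
  rw [Monic, Polynomial.leadingCoeff, hd, coeff_sub, coeff_eq_zero_of_natDegree_lt h, sub_zero]
  exact hA

private lemma dickson_monic_aux (R : Type*) [CommRing R] [Nontrivial R] :
    ∀ n : ℕ, (dickson 1 (1 : R) (n + 1)).Monic ∧ (dickson 1 (1 : R) (n + 1)).natDegree = n + 1
  | 0 => by simp [dickson_one, monic_X]
  | 1 => by
    rw [dickson_two]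
    have h3 : ((3 : R[X]) - ((1 : ℕ) : R[X])) = 2 := by push_cast; ring
    rw [h3, C_1, one_mul]
    have h := monic_sub_aux (A := (X : R[X]) ^ 2) (B := (2 : R[X])) (monic_X_pow 2)
      (by simp)
    simpa using h
  | n + 2 => by
    obtain ⟨h1m, h1d⟩ := dickson_monic_aux R (n + 1)
    obtain ⟨h0m, h0d⟩ := dickson_monic_aux R n
    rw [dickson_add_two, C_1, one_mul]
    have hAm : (X * dickson 1 (1 : R) (n + 1 + 1)).Monic := monic_X.mul h1m
    have hAd : (X * dickson 1 (1 : R) (n + 1 + 1)).natDegree = n + 3 := by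
      rw [monic_X.natDegree_mul h1m, natDegree_X, h1d]; omega
    have h := monic_sub_aux (B := dickson 1 (1 : R) (n + 1)) hAm
      (by rw [hAd, h0d]; omega)
    exact ⟨h.1, by rw [h.2, hAd]⟩

/-- If `d ∣ M`, `M ≠ 0` and the `p`-adic valuation of `d` is less than that of `M`,
then `d ∣ M / p`. -/
private lemma dvd_div_prime_aux {p d M : ℕ} (hp : p.Prime) (hdM : d ∣ M) (hM : M ≠ 0)
    (hv : padicValNat p d < padicValNat p M) : d ∣ M / p := by
  haveI := Fact.mk hp
  have hd : d ≠ 0 := by rintro rfl; exact hM (Nat.zero_dvd.mp hdM)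
  have hpM : p ∣ M := dvd_of_one_le_padicValNat (by omega)
  have hMp : M / p ≠ 0 := by
    have : 0 < M / p := Nat.div_pos (Nat.le_of_dvd (Nat.pos_of_ne_zero hM) hpM) hp.pos
    omega
  rw [← Nat.factorization_le_iff_dvd hd hMp]
  rw [Nat.factorization_div hpM]
  intro r
  rw [Finsupp.tsub_apply, hp.factorization, Finsupp.single_apply]
  by_cases hr : p = r
  · subst hr
    rw [if_pos rfl, Nat.factorization_def _ hp, Nat.factorization_def _ hp]
    omega
  · rw [if_neg hr, Nat.sub_zero]
    exact (Nat.factorization_le_iff_dvd hd hM).mpr hdM r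

/-- Let `q` be a prime power, `K` a finite field with `q` elements, `L` a degree-2
field extension of `K`, `ℓ` an odd prime dividing `q + 1`, and `η ∈ L` with `η ^ (q+1) = 1` and
`η ^ ((q+1)/ℓ) ≠ 1`.  Let `α ∈ K` be the element with `algebraMap K L α = η + η⁻¹`.  Then for
every `i ≥ 0`, the polynomial `P_{ℓ^i} - C α ∈ K[X]` is irreducible, where `P_n` is the Dickson
polynomial of the first kind with parameter 1. -/
theorem dickson_sub_C_irreducible_of_nonresidue
    (q ℓ : ℕ) (hq : IsPrimePow q)
    (K L : Type*) [Field K] [Fintype K] [Field L] [Algebra K L]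
    (hcard : Fintype.card K = q) (hKL : Module.finrank K L = 2)
    (hℓ : ℓ.Prime) (hℓodd : Odd ℓ) (hℓdvd : ℓ ∣ q + 1)
    (η : L) (hη1 : η ^ (q + 1) = 1) (hη2 : η ^ ((q + 1) / ℓ) ≠ 1)
    (α : K) (hα : algebraMap K L α = η + η⁻¹) :
    ∀ i : ℕ, Irreducible (dickson 1 (1 : K) (ℓ ^ i) - C α) := by
  intro i
  haveI := Fact.mk hℓ
  have hq2 : 2 ≤ q := hq.two_le
  set n : ℕ := ℓ ^ i with hn
  have hn1 : 1 ≤ n := Nat.one_le_pow _ _ hℓ.pos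
  -- the polynomial f
  set f : K[X] := dickson 1 (1 : K) n - C α with hf
  obtain ⟨n', hn'⟩ : ∃ n', n = n' + 1 := ⟨n - 1, by omega⟩
  obtain ⟨hdm, hdd⟩ := dickson_monic_aux K n'
  rw [← hn'] at hdm hdd
  have hfm : f.Monic ∧ f.natDegree = n := by
    have h := monic_sub_aux (B := C α) hdm (by rw [hdd, natDegree_C]; omega)
    exact ⟨h.1, by rw [h.2, hdd]⟩
  -- the algebraic closure
  let Ω := AlgebraicClosure L
  have hLinj : Function.Injective (algebraMap L Ω) := (algebraMap L Ω).injective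
  set ηb : Ω := algebraMap L Ω η with hηb
  have hη0 : η ≠ 0 := by
    rintro rfl
    rw [zero_pow (by omega)] at hη1
    exact zero_ne_one hη1
  obtain ⟨β, hβ⟩ := IsAlgClosed.exists_pow_nat_eq ηb (n := n) (by omega)
  have hβ0 : β ≠ 0 := by
    rintro rfl
    rw [zero_pow (by omega)] at hβ
    apply hη0
    apply hLinj
    rw [map_zero]
    exact hβ.symm
  set θ : Ω := β + β⁻¹ with hθ
  -- θ is a root of f
  have hαΩ : algebraMap K Ω α = ηb + ηb⁻¹ := by
    rw [IsScalarTower.algebraMap_apply K L Ω, hα, map_add, map_inv₀]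
  have hroot : aeval θ f = 0 := by
    rw [hf, map_sub, aeval_C, aeval_def, ← eval_map, map_dickson, map_one,
      dickson_one_one_eval_add_inv β β⁻¹ (mul_inv_cancel₀ hβ0), inv_pow, hβ, hαΩ]
    ring
  have hint : IsIntegral K θ := ⟨f, hfm.1, by rwa [aeval_def] at hroot⟩
  have hdvd : minpoly K θ ∣ f := minpoly.dvd K θ hroot
  set m : ℕ := (minpoly K θ).natDegree with hm
  have hm0 : 0 < m := minpoly.natDegree_pos hint
  have hfne : f ≠ 0 := hfm.1.ne_zero
  have hmle : m ≤ n := by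
    rw [← hfm.2]
    exact natDegree_le_of_dvd hdvd hfne
  -- Frobenius fixes θ at level q^m
  haveI : FiniteDimensional K (IntermediateField.adjoin K {θ}) :=
    IntermediateField.adjoin.finiteDimensional hint
  haveI : Finite (IntermediateField.adjoin K {θ}) := Module.finite_of_finite K
  haveI : Fintype (IntermediateField.adjoin K {θ}) := Fintype.ofFinite _
  have hcardF : Fintype.card (IntermediateField.adjoin K {θ}) = q ^ m := by
    rw [Module.card_eq_pow_finrank (K := K), hcard, IntermediateField.adjoin.finrank hint]
  have hfix : θ ^ q ^ m = θ := by
    have h := FiniteField.pow_card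
      (⟨θ, IntermediateField.mem_adjoin_simple_self K θ⟩ :
        IntermediateField.adjoin K {θ})
    rw [hcardF] at h
    have := congrArg (algebraMap (IntermediateField.adjoin K {θ}) Ω) h
    rwa [map_pow] at this
  -- characteristic
  obtain ⟨k, hpprime, hqpk⟩ := FiniteField.card K (ringChar K)
  rw [hcard] at hqpk
  haveI : CharP L (ringChar K) := charP_of_injective_algebraMap (algebraMap K L).injective _
  haveI : CharP Ω (ringChar K) := charP_of_injective_algebraMap hLinj _
  haveI := Fact.mk hpprime
  -- β^{q^m} is β or β⁻¹
  set b : Ω := β ^ q ^ m with hb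
  have hb0 : b ≠ 0 := pow_ne_zero _ hβ0
  have hfrob : (β + β⁻¹) ^ q ^ m = β ^ q ^ m + (β⁻¹) ^ q ^ m := by
    rw [hqpk, ← pow_mul]
    exact add_pow_char_pow (ringChar K) (↑k * m) (x := β) (y := β⁻¹)
  have hsum : b + b⁻¹ = β + β⁻¹ := by
    calc b + b⁻¹ = β ^ q ^ m + (β⁻¹) ^ q ^ m := by rw [hb, inv_pow]
    _ = (β + β⁻¹) ^ q ^ m := hfrob.symm
    _ = β + β⁻¹ := hfix
  have hcase : b = β ∨ b = β⁻¹ := by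
    have hexp : (b - β) * (b - β⁻¹) =
        b * ((b + b⁻¹) - (β + β⁻¹)) + (β * β⁻¹ - b * b⁻¹) := by
      ring
    rw [hsum, sub_self, mul_zero, mul_inv_cancel₀ hβ0, mul_inv_cancel₀ hb0,
      sub_self, add_zero] at hexp
    rcases mul_eq_zero.mp hexp with h | h
    · exact Or.inl (sub_eq_zero.mp h)
    · exact Or.inr (sub_eq_zero.mp h)
  -- order of β
  set N : ℕ := orderOf β with hN
  have hNdvd : N ∣ n * (q + 1) := by
    apply orderOf_dvd_of_pow_eq_one
    rw [pow_mul, hβ, ← map_pow, hη1, map_one]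
  have hNne : N ≠ 0 := by
    rintro h
    rw [h] at hNdvd
    have h1 := Nat.zero_dvd.mp hNdvd
    have h2 : n * (q + 1) ≠ 0 := by positivity
    omega
  have hNnot : ¬ N ∣ n * ((q + 1) / ℓ) := by
    intro h
    have hpow : β ^ (n * ((q + 1) / ℓ)) = 1 := orderOf_dvd_iff_pow_eq_one.mp h
    rw [pow_mul, hβ, ← map_pow, ← map_one (algebraMap L Ω)] at hpow
    exact hη2 (hLinj hpow)
  set a : ℕ := padicValNat ℓ (q + 1) with ha
  have hkey : i + a ≤ padicValNat ℓ N := by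
    by_contra hcon
    push_neg at hcon
    have hvM : padicValNat ℓ (n * (q + 1)) = i + a := by
      rw [padicValNat.mul (by omega) (by omega), hn, padicValNat.prime_pow]
    have := dvd_div_prime_aux hℓ hNdvd (by positivity) (by omega)
    rw [Nat.mul_div_assoc n hℓdvd] at this
    exact hNnot this
  have hℓN : ℓ ^ (i + a) ∣ N := (padicValNat_dvd_iff_le hNne).mpr hkey
  -- N divides q^m - 1 or q^m + 1
  have hNq : N ∣ q ^ m - 1 ∨ N ∣ q ^ m + 1 := by
    have hq1 : 1 ≤ q ^ m := Nat.one_le_pow _ _ (by omega)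
    rcases hcase with h | h
    · left
      apply orderOf_dvd_of_pow_eq_one
      have h2 : β ^ (q ^ m - 1) * β = 1 * β := by
        rw [← pow_succ, one_mul, Nat.sub_add_cancel hq1]
        exact hb.symm.trans h
      exact mul_right_cancel₀ hβ0 h2
    · right
      apply orderOf_dvd_of_pow_eq_one
      rw [pow_succ, ← hb, h, inv_mul_cancel₀ hβ0]
  -- hence ℓ^(i+a) ∣ q^(2m) - 1
  have hQ1 : 2 ≤ q ^ m := by
    calc 2 ≤ q := hq2
    _ = q ^ 1 := (pow_one q).symm
    _ ≤ q ^ m := Nat.pow_le_pow_right (by omega) hm0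
  have hsq : (q ^ m) ^ 2 - 1 = (q ^ m - 1) * (q ^ m + 1) := by
    obtain ⟨s, hs⟩ : ∃ s, q ^ m = s + 1 := ⟨q ^ m - 1, by omega⟩
    have h1 : (s + 1) ^ 2 = s * (s + 1 + 1) + 1 := by ring
    rw [hs]
    simp only [Nat.add_sub_cancel]
    omega
  have hdvd2 : ℓ ^ (i + a) ∣ (q ^ 2) ^ m - 1 := by
    have h2 : (q ^ 2) ^ m = (q ^ m) ^ 2 := by rw [← pow_mul, ← pow_mul, Nat.mul_comm]
    rw [h2, hsq]
    rcases hNq with h | h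
    · exact Dvd.dvd.mul_right (hℓN.trans h) _
    · exact Dvd.dvd.mul_left (hℓN.trans h) _
  -- lifting the exponent
  have hℓq1 : ¬ ℓ ∣ q - 1 := by
    intro h
    have h2 : ℓ ∣ (q + 1) - (q - 1) := Nat.dvd_sub hℓdvd h
    have h3 : (q + 1) - (q - 1) = 2 := by omega
    rw [h3] at h2
    have := Nat.le_of_dvd (by omega) h2
    interval_cases ℓ
    · exact Nat.not_prime_zero hℓ
    · exact Nat.not_prime_one hℓ
    · simp [Nat.odd_iff] at hℓodd
  have hℓq : ¬ ℓ ∣ q ^ 2 := by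
    intro h
    have := hℓ.dvd_of_dvd_pow h
    have h1 : ℓ ∣ (q + 1) - q := Nat.dvd_sub hℓdvd this
    have h2 : (q + 1) - q = 1 := by omega
    rw [h2] at h1
    exact hℓ.one_lt.ne' (Nat.dvd_one.mp h1)
  have hℓq2 : ℓ ∣ q ^ 2 - 1 := by
    have hqq : q ^ 2 - 1 = (q - 1) * (q + 1) := by
      obtain ⟨s, hs⟩ : ∃ s, q = s + 1 := ⟨q - 1, by omega⟩
      have h1 : (s + 1) ^ 2 = s * (s + 1 + 1) + 1 := by ring
      rw [hs]
      simp only [Nat.add_sub_cancel]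
      omega
    rw [hqq]
    exact Dvd.dvd.mul_left hℓdvd _
  have hlte : padicValNat ℓ ((q ^ 2) ^ m - 1 ^ m) =
      padicValNat ℓ (q ^ 2 - 1) + padicValNat ℓ m := by
    exact padicValNat.pow_sub_pow hℓodd (by nlinarith) (by simpa using hℓq2) hℓq (by omega)
  have hval2 : padicValNat ℓ (q ^ 2 - 1) = a := by
    have hfac : q ^ 2 - 1 = (q - 1) * (q + 1) := by
      obtain ⟨s, hs⟩ : ∃ s, q = s + 1 := ⟨q - 1, by omega⟩
      have h1 : (s + 1) ^ 2 = s * (s + 1 + 1) + 1 := by ring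
      rw [hs]
      simp only [Nat.add_sub_cancel]
      omega
    rw [hfac, padicValNat.mul (by omega) (by omega),
      padicValNat.eq_zero_of_not_dvd hℓq1, zero_add]
  have hT0 : (q ^ 2) ^ m - 1 ≠ 0 := by
    have : q ^ 2 ≤ (q ^ 2) ^ m := by
      calc q ^ 2 = (q ^ 2) ^ 1 := (pow_one _).symm
      _ ≤ (q ^ 2) ^ m := Nat.pow_le_pow_right (by positivity) hm0
    have h4 : 4 ≤ q ^ 2 := by nlinarith
    omega
  have hile : i + a ≤ a + padicValNat ℓ m := by
    have := (padicValNat_dvd_iff_le hT0).mp hdvd2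
    rw [one_pow] at hlte
    omega
  have hlim : ℓ ^ i ∣ m := (padicValNat_dvd_iff_le (by omega)).mpr (by omega)
  have hnm : n ≤ m := Nat.le_of_dvd hm0 hlim
  -- conclude
  have hassoc : Associated (minpoly K θ) f :=
    associated_of_dvd_of_natDegree_le hdvd hfne (by rw [hfm.2]; omega)
  have hfeq : minpoly K θ = f :=
    eq_of_monic_of_associated (minpoly.monic hint) hfm.1 hassoc
  rw [← hfeq]
  exact minpoly.irreducible hint
end

section
/- Let q be a prime power, K a finite field with q elements, L a degree-2 field extension of K, ℓ an odd prime dividing q+1, η ∈ L with η^(q+1) = 1 and η^((q+1)/ℓ) ≠ 1, and α ∈ K with algebraMap K L α = η + η⁻¹. Let Ω be an algebraically closed field containing L. Then for every i ≥ 0, the set of roots in Ω of the polynomial P_{ℓ^i} − C α ∈ K[X] is exactly { μ + μ⁻¹ : μ ∈ Ω, μ^(ℓ^i) = η }, and this root set has exactly ℓ^i elements (so P_{ℓ^i} − C α is squarefree). -/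
/-!
Since `P_n (μ + μ⁻¹) = μ ^ n + μ⁻¹ ^ n` and every element of an algebraically closed field has the
form `μ + μ⁻¹`, the roots of `P_n - α` are the `μ + μ⁻¹` with `μ ^ n = η` (up to replacing `μ` by
`μ⁻¹`). As `ℓ` divides `q + 1` it is prime to the characteristic, so `η` has exactly `ℓ ^ i`
distinct `ℓ ^ i`-th roots, and `μ ↦ μ + μ⁻¹` is injective on them: `μ + μ⁻¹ = ν + ν⁻¹` with
`μ ≠ ν` forces `μ ν = 1`, hence `η ^ 2 = 1`, which the non-residue condition excludes for odd `ℓ`.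
-/

open Polynomial

theorem add_inv_eq_add_inv_iff {F : Type*} [Field F] {a b : F} (ha : a ≠ 0) (hb : b ≠ 0) :
    a + a⁻¹ = b + b⁻¹ ↔ a = b ∨ a = b⁻¹ := by
  refine ⟨fun h => ?_, ?_⟩
  · have key : (a - b) * (a * b - 1) = 0 := by
      field_simp at h
      linear_combination h
    rcases mul_eq_zero.mp key with h' | h'
    · exact Or.inl (sub_eq_zero.mp h')
    · exact Or.inr (eq_inv_of_mul_eq_one_left (sub_eq_zero.mp h'))
  · rintro (rfl | rfl)
    · rfl
    · rw [inv_inv, add_comm]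

theorem sq_ne_one_of_pow_div_ne_one {M : Type*} [Monoid M] {m ℓ : ℕ} (hℓ : Odd ℓ) (hdvd : ℓ ∣ m)
    {x : M} (hm : x ^ m = 1) (hx : x ^ (m / ℓ) ≠ 1) : x ^ 2 ≠ 1 := by
  intro hx2
  obtain ⟨k, rfl⟩ := hdvd
  rw [Nat.mul_div_cancel_left _ hℓ.pos] at hx
  rcases Nat.even_or_odd k with ⟨j, rfl⟩ | hk
  · exact hx (by rw [← two_mul, pow_mul, hx2, one_pow])
  · obtain ⟨j, hj⟩ := hℓ.mul hk
    rw [hj, pow_succ, pow_mul, hx2, one_pow, one_mul] at hm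
    exact hx (by rw [hm, one_pow])

theorem natCast_ne_zero_of_dvd_card_add_one {R : Type*} [Ring R] [Nontrivial R] [Fintype R]
    {m : ℕ} (h : m ∣ Fintype.card R + 1) : (m : R) ≠ 0 := by
  intro hm
  obtain ⟨c, hc⟩ := h
  have : ((Fintype.card R + 1 : ℕ) : R) = 0 := by rw [hc, Nat.cast_mul, hm, zero_mul]
  rw [Nat.cast_add, Nat.cast_card_eq_zero, zero_add, Nat.cast_one] at this
  exact one_ne_zero this

namespace Polynomial

theorem dickson_one_one_eval_add_inv_of_ne_zero {F : Type*} [Field F] {μ : F} (hμ : μ ≠ 0)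
    (n : ℕ) : (dickson 1 (1 : F) n).eval (μ + μ⁻¹) = μ ^ n + (μ ^ n)⁻¹ := by
  rw [dickson_one_one_eval_add_inv _ _ (mul_inv_cancel₀ hμ), inv_pow]

theorem dickson_one_one_sub_C_ne_zero {R : Type*} [CommRing R] {c : R} (hc : c ≠ 2) (n : ℕ) :
    dickson 1 (1 : R) n - C c ≠ 0 := by
  intro h
  have h2 := dickson_one_one_eval_add_inv (1 : R) 1 (mul_one 1) n
  rw [sub_eq_zero.mp h, eval_C, one_pow, one_add_one_eq_two] at h2
  exact hc h2

theorem mem_rootSet_dickson_one_one_sub_C {R S : Type*} [Field R] [CommRing S] [IsDomain S]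
    [Algebra R S] {c : R} (hc : c ≠ 2) {n : ℕ} {x : S} :
    x ∈ (dickson 1 (1 : R) n - C c).rootSet S ↔
      (dickson 1 (1 : S) n).eval x = algebraMap R S c := by
  rw [mem_rootSet_of_ne (dickson_one_one_sub_C_ne_zero hc n), map_sub, aeval_C, sub_eq_zero,
    ← eval_map_algebraMap, map_dickson, map_one]

end Polynomial

theorem injOn_add_inv_setOf_pow_eq {F : Type*} [Field F] {n : ℕ} (hn : n ≠ 0) {ζ : F}
    (hζ0 : ζ ≠ 0) (hζ : ζ ^ 2 ≠ 1) : Set.InjOn (fun μ : F => μ + μ⁻¹) {μ | μ ^ n = ζ} := by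
  intro μ (hμ : μ ^ n = ζ) ν (hν : ν ^ n = ζ) h
  have hμ0 : μ ≠ 0 := ne_zero_pow hn (hμ ▸ hζ0)
  have hν0 : ν ≠ 0 := ne_zero_pow hn (hν ▸ hζ0)
  refine ((add_inv_eq_add_inv_iff hμ0 hν0).mp h).resolve_right fun hμν => hζ ?_
  calc ζ ^ 2 = ν⁻¹ ^ n * ν ^ n := by rw [← hμν, hμ, hν, sq]
    _ = 1 := by rw [inv_pow, inv_mul_cancel₀ (pow_ne_zero n hν0)]

namespace IsAlgClosed

variable {Ω : Type*} [Field Ω] [IsAlgClosed Ω]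

theorem exists_add_inv_eq (x : Ω) : ∃ μ ≠ 0, μ + μ⁻¹ = x := by
  have hdeg : (X ^ 2 - C x * X + 1 : Polynomial Ω).degree = 2 := by compute_degree!
  obtain ⟨μ, hμ⟩ := exists_root (X ^ 2 - C x * X + 1 : Polynomial Ω) (by rw [hdeg]; decide)
  have hμ' : μ ^ 2 - x * μ + 1 = 0 := by simpa using hμ
  have hμ0 : μ ≠ 0 := by rintro rfl; simp at hμ'
  refine ⟨μ, hμ0, ?_⟩
  field_simp
  linear_combination hμ'

theorem dickson_one_one_eval_eq_add_inv_iff {n : ℕ} (hn : n ≠ 0) {ζ : Ω} (hζ : ζ ≠ 0) (x : Ω) :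
    (dickson 1 (1 : Ω) n).eval x = ζ + ζ⁻¹ ↔ ∃ μ, μ ^ n = ζ ∧ x = μ + μ⁻¹ := by
  constructor
  · intro hx
    obtain ⟨μ, hμ0, rfl⟩ := exists_add_inv_eq x
    rw [dickson_one_one_eval_add_inv_of_ne_zero hμ0,
      add_inv_eq_add_inv_iff (pow_ne_zero n hμ0) hζ] at hx
    rcases hx with h | h
    · exact ⟨μ, h, rfl⟩
    · exact ⟨μ⁻¹, by rw [inv_pow, h, inv_inv], by rw [inv_inv, add_comm]⟩
  · rintro ⟨μ, rfl, rfl⟩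
    exact dickson_one_one_eval_add_inv_of_ne_zero (ne_zero_pow hn hζ) n

theorem ncard_setOf_pow_eq {n : ℕ} (hn : (n : Ω) ≠ 0) {ζ : Ω} (hζ : ζ ≠ 0) :
    {μ : Ω | μ ^ n = ζ}.ncard = n := by
  have hn0 : 0 < n := Nat.pos_of_ne_zero (by rintro rfl; exact hn Nat.cast_zero)
  have hroots : {μ : Ω | μ ^ n = ζ} = (X ^ n - C ζ).rootSet Ω := by
    ext μ
    rw [mem_rootSet_of_ne (X_pow_sub_C_ne_zero hn0 ζ)]
    simp [sub_eq_zero]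
  rw [hroots, ← Nat.card_coe_set_eq, Nat.card_eq_fintype_card,
    card_rootSet_eq_natDegree (separable_X_pow_sub_C ζ hn hζ) (splits _), natDegree_X_pow_sub_C]

theorem ncard_setOf_add_inv_of_pow_eq {n : ℕ} (hn : (n : Ω) ≠ 0) {ζ : Ω} (hζ0 : ζ ≠ 0)
    (hζ : ζ ^ 2 ≠ 1) : {x : Ω | ∃ μ, μ ^ n = ζ ∧ x = μ + μ⁻¹}.ncard = n := by
  have hn0 : n ≠ 0 := by rintro rfl; exact hn Nat.cast_zero
  have himage : {x : Ω | ∃ μ, μ ^ n = ζ ∧ x = μ + μ⁻¹}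
      = (fun μ => μ + μ⁻¹) '' {μ | μ ^ n = ζ} := by
    ext x
    simp only [Set.mem_ofPred_eq, Set.mem_image, eq_comm]
  rw [himage, (injOn_add_inv_setOf_pow_eq hn0 hζ0 hζ).ncard_image, ncard_setOf_pow_eq hn hζ0]

end IsAlgClosed

theorem rootSet_dickson_sub_C_general
    (q ℓ : ℕ)
    (K L Ω : Type*) [Field K] [Fintype K] [Field L] [Algebra K L]
    [Field Ω] [IsAlgClosed Ω] [Algebra L Ω] [Algebra K Ω] [IsScalarTower K L Ω]
    (hcard : Fintype.card K = q)
    (hℓodd : Odd ℓ) (hℓdvd : ℓ ∣ q + 1)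
    (η : L) (hη1 : η ^ (q + 1) = 1) (hη2 : η ^ ((q + 1) / ℓ) ≠ 1)
    (α : K) (hα : algebraMap K L α = η + η⁻¹) :
    ∀ i : ℕ,
      (dickson 1 (1 : K) (ℓ ^ i) - C α).rootSet Ω
          = {x : Ω | ∃ μ : Ω, μ ^ ℓ ^ i = algebraMap L Ω η ∧ x = μ + μ⁻¹} ∧
      ((dickson 1 (1 : K) (ℓ ^ i) - C α).rootSet Ω).ncard = ℓ ^ i := by
  intro i
  have hη0 : η ≠ 0 := by rintro rfl; simp at hη1
  have hηsq : η ^ 2 ≠ 1 := sq_ne_one_of_pow_div_ne_one hℓodd hℓdvd hη1 hη2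
  have hα2 : α ≠ 2 := by
    rintro rfl
    have h : η + η⁻¹ = 1 + 1⁻¹ := by rw [← hα, map_ofNat, inv_one, one_add_one_eq_two]
    rcases (add_inv_eq_add_inv_iff hη0 one_ne_zero).mp h with h | h <;> simp [h] at hηsq
  set ζ := algebraMap L Ω η
  have hζ0 : ζ ≠ 0 := (_root_.map_ne_zero _).mpr hη0
  have hζsq : ζ ^ 2 ≠ 1 := by
    rw [← map_pow, ← map_one (algebraMap L Ω)]
    exact (algebraMap L Ω).injective.ne hηsq
  have hαζ : algebraMap K Ω α = ζ + ζ⁻¹ := by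
    rw [IsScalarTower.algebraMap_apply K L Ω, hα, map_add, map_inv₀]
  have hℓK : (ℓ : K) ≠ 0 := natCast_ne_zero_of_dvd_card_add_one (hcard ▸ hℓdvd)
  have hnΩ : ((ℓ ^ i : ℕ) : Ω) ≠ 0 := by
    rw [← map_natCast (algebraMap K Ω), Nat.cast_pow]
    exact (_root_.map_ne_zero _).mpr (pow_ne_zero i hℓK)
  have hset : (dickson 1 (1 : K) (ℓ ^ i) - C α).rootSet Ω
      = {x : Ω | ∃ μ : Ω, μ ^ ℓ ^ i = ζ ∧ x = μ + μ⁻¹} := by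
    ext x
    rw [mem_rootSet_dickson_one_one_sub_C hα2, hαζ,
      IsAlgClosed.dickson_one_one_eval_eq_add_inv_iff (pow_ne_zero i hℓodd.pos.ne') hζ0]
    rfl
  exact ⟨hset, hset ▸ IsAlgClosed.ncard_setOf_add_inv_of_pow_eq hnΩ hζ0 hζsq⟩

/-- with `q, K, L, ℓ, η, α` as in the quasi-cyclotomic `T₂` construction and `Ω` an
algebraically closed field containing `L`, for every `i ≥ 0` the set of roots in `Ω` of
`P_{ℓ^i} - C α ∈ K[X]` is exactly `{ μ + μ⁻¹ : μ ∈ Ω, μ ^ (ℓ^i) = η }`, and this root set has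
exactly `ℓ^i` elements (so `P_{ℓ^i} - C α` is squarefree). -/
theorem rootSet_dickson_sub_C
    (q ℓ : ℕ) (hq : IsPrimePow q)
    (K L Ω : Type*) [Field K] [Fintype K] [Field L] [Algebra K L]
    [Field Ω] [IsAlgClosed Ω] [Algebra L Ω] [Algebra K Ω] [IsScalarTower K L Ω]
    (hcard : Fintype.card K = q) (hKL : Module.finrank K L = 2)
    (hℓ : ℓ.Prime) (hℓodd : Odd ℓ) (hℓdvd : ℓ ∣ q + 1)
    (η : L) (hη1 : η ^ (q + 1) = 1) (hη2 : η ^ ((q + 1) / ℓ) ≠ 1)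
    (α : K) (hα : algebraMap K L α = η + η⁻¹) :
    ∀ i : ℕ,
      (dickson 1 (1 : K) (ℓ ^ i) - C α).rootSet Ω
          = {x : Ω | ∃ μ : Ω, μ ^ ℓ ^ i = algebraMap L Ω η ∧ x = μ + μ⁻¹} ∧
      ((dickson 1 (1 : K) (ℓ ^ i) - C α).rootSet Ω).ncard = ℓ ^ i :=
  rootSet_dickson_sub_C_general q ℓ K L Ω hcard hℓodd hℓdvd η hη1 hη2 α hα
end

section
/- Let q be a prime power, K a finite field with q elements, L a degree-2 field extension of K, ℓ an odd prime dividing q+1, η ∈ L with η^(q+1) = 1 and η^((q+1)/ℓ) ≠ 1, and α ∈ K with algebraMap K L α = η + η⁻¹. Let Ω be an algebraically closed field containing L, let i ≥ 0 and let μ ∈ Ω satisfy μ^(ℓ^i) = η. Then the minimal polynomial of μ + μ⁻¹ over K equals P_{ℓ^i} − C α. -/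
/-!
With `β = μ + μ⁻¹`, the identity `P_n(x + x⁻¹) = xⁿ + x⁻ⁿ` gives
`P_{ℓ^i}(β) = η + η⁻¹ = α`, so the minimal polynomial of `β` divides the monic polynomial
`P_{ℓ^i} - α` of degree `ℓ^i`, and it suffices to show that `m = [K(β) : K]` is at least `ℓ^i`.
Since `β` lies in the field `K(β)` with `q^m` elements, the `q^m`-power Frobenius `σ` fixes `β`,
so `σ μ` is a root of `X² - βX + 1`, i.e. `σ μ ∈ {μ, μ⁻¹}`, and `μ^(q^(2m) - 1) = 1`. The
hypotheses on `η` force the `ℓ`-part of the order of `μ` to be the full `ℓ`-part `ℓ^(i + a)` of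
`ℓ^i (q + 1)`, where `a = v_ℓ(q + 1)`, while lifting the exponent gives
`v_ℓ(q^(2m) - 1) = a + v_ℓ(m)`; hence `ℓ^i ∣ m`.
-/

open Polynomial

namespace Polynomial

variable {R : Type*} [CommRing R] (k : ℕ) (a : R)

theorem natDegree_dickson_le : ∀ n, (dickson k a n).natDegree ≤ n
  | 0 => by
    rw [dickson_zero]
    exact (natDegree_sub_le _ _).trans (by simp)
  | 1 => by simp [natDegree_X_le]
  | n + 2 => by
    rw [dickson_add_two]
    refine (natDegree_sub_le _ _).trans (max_le ?_ ?_)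
    · have h₁ := natDegree_dickson_le (n + 1)
      have h₂ : (X : R[X]).natDegree ≤ 1 := natDegree_X_le
      exact natDegree_mul_le.trans (by omega)
    · have := natDegree_dickson_le n
      exact (natDegree_C_mul_le _ _).trans (by omega)

theorem coeff_dickson_succ_self : ∀ n, (dickson k a (n + 1)).coeff (n + 1) = 1
  | 0 => by simp
  | n + 1 => by
    rw [dickson_add_two, coeff_sub, coeff_X_mul, coeff_dickson_succ_self n, coeff_C_mul,
      coeff_eq_zero_of_natDegree_lt ((natDegree_dickson_le k a n).trans_lt (by omega)),
      mul_zero, sub_zero]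

variable {k a} {n : ℕ}

theorem monic_dickson_sub_C (hn : n ≠ 0) (b : R) : (dickson k a n - C b).Monic := by
  obtain ⟨n, rfl⟩ := Nat.exists_eq_succ_of_ne_zero hn
  refine monic_of_natDegree_le_of_coeff_eq_one _
    (natDegree_sub_C.trans_le (natDegree_dickson_le k a _)) ?_
  rw [coeff_sub, coeff_dickson_succ_self, coeff_C_succ, sub_zero]

theorem natDegree_dickson [Nontrivial R] (hn : n ≠ 0) : (dickson k a n).natDegree = n := by
  obtain ⟨n, rfl⟩ := Nat.exists_eq_succ_of_ne_zero hn
  exact natDegree_eq_of_le_of_coeff_ne_zero (natDegree_dickson_le k a _)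
    (by rw [coeff_dickson_succ_self]; exact one_ne_zero)

end Polynomial

theorem eq_or_eq_inv_of_add_inv_eq_add_inv {F : Type*} [Field F] {x y : F} (hx : x ≠ 0)
    (hy : y ≠ 0) (h : x + x⁻¹ = y + y⁻¹) : x = y ∨ x = y⁻¹ := by
  have : (x - y) * (x - y⁻¹) = 0 := by
    linear_combination x * h - mul_inv_cancel₀ hx + mul_inv_cancel₀ hy
  simpa [sub_eq_zero] using this

theorem RingHom.map_map_eq_self_of_map_add_inv {F : Type*} [Field F] (σ : F →+* F) {x : F}
    (hx : x ≠ 0) (h : σ (x + x⁻¹) = x + x⁻¹) : σ (σ x) = x := by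
  rw [map_add, map_inv₀] at h
  rcases eq_or_eq_inv_of_add_inv_eq_add_inv ((map_ne_zero σ).mpr hx) hx h with hσ | hσ
  · rw [hσ, hσ]
  · rw [hσ, map_inv₀, hσ, inv_inv]

theorem pow_card_mul_card_eq_self_of_add_inv_mem {F Ω : Type*} [Field F] [Fintype F] [Field Ω]
    [Algebra F Ω] {μ : Ω} (hμ : μ ≠ 0) (h : μ + μ⁻¹ ∈ Set.range (algebraMap F Ω)) :
    μ ^ (Fintype.card F * Fintype.card F) = μ := by
  obtain ⟨b, hb⟩ := h
  have := (FiniteField.frobeniusAlgHom F Ω : Ω →+* Ω).map_map_eq_self_of_map_add_inv hμ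
    (by rw [← hb]; exact (FiniteField.frobeniusAlgHom F Ω).commutes b)
  simpa [FiniteField.coe_frobeniusAlgHom, ← pow_mul] using this

theorem orderOf_dvd_sub_one_of_pow_eq_self {G₀ : Type*} [GroupWithZero G₀] {x : G₀} (hx : x ≠ 0)
    {N : ℕ} (h : x ^ N = x) : orderOf x ∣ N - 1 := by
  refine orderOf_dvd_of_pow_eq_one ?_
  rcases N with _ | N
  · simp
  · simpa [pow_succ, hx] using h

theorem Nat.pow_padicValNat_dvd_of_dvd_of_not_dvd_div {ℓ d M : ℕ} [hℓ : Fact ℓ.Prime]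
    (hd : d ∣ M) (hnd : ¬ d ∣ M / ℓ) : ℓ ^ padicValNat ℓ M ∣ d := by
  have hM : M ≠ 0 := by rintro rfl; simp at hnd
  have hd0 : d ≠ 0 := ne_zero_of_dvd_ne_zero hM hd
  by_cases hℓM : ℓ ∣ M
  swap
  · simp [padicValNat.eq_zero_of_not_dvd hℓM]
  rw [padicValNat_dvd_iff_le hd0]
  by_contra! hlt
  apply hnd
  have hMℓ : M / ℓ ≠ 0 := (Nat.div_ne_zero_iff_of_dvd hℓM).mpr ⟨hM, hℓ.out.ne_zero⟩
  rw [← Nat.factorization_le_iff_dvd hd0 hMℓ, Nat.factorization_div hℓM, hℓ.out.factorization]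
  intro p
  by_cases hp : p = ℓ
  · subst hp
    rw [Finsupp.tsub_apply, Finsupp.single_eq_same, Nat.factorization_def _ hℓ.out,
      Nat.factorization_def _ hℓ.out]
    omega
  · simpa [Finsupp.single_apply, Ne.symm hp] using (Nat.factorization_le_iff_dvd hd0 hM).mpr hd p

theorem pow_padicValNat_dvd_orderOf {G : Type*} [Monoid G] {x : G} {ℓ M : ℕ} [Fact ℓ.Prime]
    (hM : x ^ M = 1) (hMℓ : x ^ (M / ℓ) ≠ 1) : ℓ ^ padicValNat ℓ M ∣ orderOf x :=
  Nat.pow_padicValNat_dvd_of_dvd_of_not_dvd_div (orderOf_dvd_of_pow_eq_one hM)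
    (fun h => hMℓ (orderOf_dvd_iff_pow_eq_one.mp h))

theorem padicValNat_sq_pow_sub_one {ℓ q : ℕ} [hℓ : Fact ℓ.Prime] (hℓodd : Odd ℓ)
    (hdvd : ℓ ∣ q + 1) {m : ℕ} (hm : m ≠ 0) :
    padicValNat ℓ ((q ^ 2) ^ m - 1) = padicValNat ℓ (q + 1) + padicValNat ℓ m := by
  have hℓ3 : 3 ≤ ℓ := by
    have := hℓ.out.two_le
    rcases hℓodd with ⟨k, rfl⟩
    omega
  have hq : 2 ≤ q := by
    have := Nat.le_of_dvd (Nat.succ_pos q) hdvd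
    omega
  have hℓq : ¬ ℓ ∣ q := fun h => hℓ.out.one_lt.ne' (Nat.dvd_one.mp ((Nat.dvd_add_right h).mp hdvd))
  have hℓq1 : ¬ ℓ ∣ q - 1 := by
    intro h
    have h2 : ℓ ∣ 2 := by simpa [show q + 1 - (q - 1) = 2 by omega] using Nat.dvd_sub hdvd h
    have := Nat.le_of_dvd two_pos h2
    omega
  have hsq : q ^ 2 - 1 = (q + 1) * (q - 1) := by simpa using Nat.pow_two_sub_pow_two q 1
  have := padicValNat.pow_sub_pow (x := q ^ 2) (y := 1) hℓodd (by nlinarith)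
    (hsq ▸ dvd_mul_of_dvd_left hdvd _) (fun h => hℓq (hℓ.out.dvd_of_dvd_pow h)) hm
  rw [one_pow] at this
  rw [this, hsq, padicValNat.mul (by omega) (by omega), padicValNat.eq_zero_of_not_dvd hℓq1,
    add_zero]

open IntermediateField in
theorem pow_le_natDegree_minpoly_add_inv {K Ω : Type*} [Field K] [Fintype K] [Field Ω]
    [Algebra K Ω] {ℓ i : ℕ} [hℓ : Fact ℓ.Prime] (hℓodd : Odd ℓ)
    (hdvd : ℓ ∣ Fintype.card K + 1) {μ : Ω} (hμ0 : μ ≠ 0)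
    (hμ1 : μ ^ (ℓ ^ i * (Fintype.card K + 1)) = 1)
    (hμ2 : μ ^ (ℓ ^ i * ((Fintype.card K + 1) / ℓ)) ≠ 1) (hint : IsIntegral K (μ + μ⁻¹)) :
    ℓ ^ i ≤ (minpoly K (μ + μ⁻¹)).natDegree := by
  set q := Fintype.card K
  set m := (minpoly K (μ + μ⁻¹)).natDegree
  have hm : m ≠ 0 := (minpoly.natDegree_pos hint).ne'
  have := adjoin.finiteDimensional hint
  have : Finite K⟮μ + μ⁻¹⟯ := Module.finite_of_finite K
  let _ : Fintype K⟮μ + μ⁻¹⟯ := Fintype.ofFinite _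
  have hcard : Fintype.card K⟮μ + μ⁻¹⟯ = q ^ m := by
    rw [Module.card_eq_pow_finrank (K := K), adjoin.finrank hint]
  have hfix := pow_card_mul_card_eq_self_of_add_inv_mem hμ0 ⟨_, AdjoinSimple.algebraMap_gen K _⟩
  rw [hcard, ← pow_add, ← two_mul, pow_mul] at hfix
  have hord : ℓ ^ (i + padicValNat ℓ (q + 1)) ∣ (q ^ 2) ^ m - 1 := by
    refine dvd_trans ?_ (orderOf_dvd_sub_one_of_pow_eq_self hμ0 hfix)
    have := pow_padicValNat_dvd_orderOf hμ1 (by rwa [Nat.mul_div_assoc _ hdvd])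
    rwa [padicValNat.mul (pow_pos hℓ.out.pos i).ne' (by omega), padicValNat.prime_pow] at this
  have hQ : (q ^ 2) ^ m - 1 ≠ 0 :=
    Nat.sub_ne_zero_of_lt (Nat.one_lt_pow hm (Nat.one_lt_pow two_ne_zero Fintype.one_lt_card))
  have hval := (padicValNat_dvd_iff_le hQ).mp hord
  rw [padicValNat_sq_pow_sub_one hℓodd hdvd hm] at hval
  exact Nat.le_of_dvd (Nat.pos_of_ne_zero hm) ((padicValNat_dvd_iff_le hm).mpr (by omega))

theorem minpoly_add_inv_eq_dickson_sub_C_general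
    (q ℓ : ℕ)
    (K L Ω : Type*) [Field K] [Fintype K] [Field L] [Algebra K L]
    [Field Ω] [Algebra L Ω] [Algebra K Ω] [IsScalarTower K L Ω]
    (hcard : Fintype.card K = q)
    (hℓ : ℓ.Prime) (hℓodd : Odd ℓ) (hℓdvd : ℓ ∣ q + 1)
    (η : L) (hη1 : η ^ (q + 1) = 1) (hη2 : η ^ ((q + 1) / ℓ) ≠ 1)
    (α : K) (hα : algebraMap K L α = η + η⁻¹)
    (i : ℕ) (μ : Ω) (hμ : μ ^ ℓ ^ i = algebraMap L Ω η) :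
    minpoly K (μ + μ⁻¹) = dickson 1 (1 : K) (ℓ ^ i) - C α := by
  subst hcard
  have : Fact ℓ.Prime := ⟨hℓ⟩
  have hn : ℓ ^ i ≠ 0 := pow_ne_zero i hℓ.ne_zero
  have hμ0 : μ ≠ 0 := by
    rintro rfl
    rw [zero_pow hn, eq_comm, map_eq_zero] at hμ
    simp [hμ] at hη1
  have hroot : aeval (μ + μ⁻¹) (dickson 1 (1 : K) (ℓ ^ i) - C α) = 0 := by
    rw [map_sub, aeval_C, IsScalarTower.algebraMap_apply K L Ω, hα, aeval_def, eval₂_eq_eval_map,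
      map_dickson, map_one, dickson_one_one_eval_add_inv _ _ (mul_inv_cancel₀ hμ0), inv_pow, hμ,
      map_add, map_inv₀, sub_self]
  have hmonic := monic_dickson_sub_C (k := 1) (a := (1 : K)) hn α
  have hint : IsIntegral K (μ + μ⁻¹) := ⟨_, hmonic, hroot⟩
  refine (eq_of_monic_of_dvd_of_natDegree_le (minpoly.monic hint) hmonic
    (minpoly.dvd K _ hroot) ?_).symm
  rw [natDegree_sub_C, natDegree_dickson hn]
  refine pow_le_natDegree_minpoly_add_inv hℓodd hℓdvd hμ0 ?_ ?_ hint
  · rw [pow_mul, hμ, ← map_pow, hη1, map_one]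
  · rwa [pow_mul, hμ, ← map_pow, ne_eq, map_eq_one_iff _ (algebraMap L Ω).injective]

/-- with `q, K, L, ℓ, η, α` as in the quasi-cyclotomic `T₂` construction, `Ω` an
algebraically closed field containing `L`, `i ≥ 0` and `μ ∈ Ω` with `μ ^ (ℓ^i) = η`, the minimal
polynomial of `μ + μ⁻¹` over `K` equals `P_{ℓ^i} - C α`, where `P_n` is the Dickson polynomial of
the first kind with parameter 1. -/
theorem minpoly_add_inv_eq_dickson_sub_C
    (q ℓ : ℕ) (hq : IsPrimePow q)
    (K L Ω : Type*) [Field K] [Fintype K] [Field L] [Algebra K L]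
    [Field Ω] [IsAlgClosed Ω] [Algebra L Ω] [Algebra K Ω] [IsScalarTower K L Ω]
    (hcard : Fintype.card K = q) (hKL : Module.finrank K L = 2)
    (hℓ : ℓ.Prime) (hℓodd : Odd ℓ) (hℓdvd : ℓ ∣ q + 1)
    (η : L) (hη1 : η ^ (q + 1) = 1) (hη2 : η ^ ((q + 1) / ℓ) ≠ 1)
    (α : K) (hα : algebraMap K L α = η + η⁻¹)
    (i : ℕ) (μ : Ω) (hμ : μ ^ ℓ ^ i = algebraMap L Ω η) :
    minpoly K (μ + μ⁻¹) = dickson 1 (1 : K) (ℓ ^ i) - C α :=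
  minpoly_add_inv_eq_dickson_sub_C_general q ℓ K L Ω hcard hℓ hℓodd hℓdvd η hη1 hη2 α hα i μ hμ
end

section
/- For all n ≥ 1 and 0 ≤ k ≤ n, the coefficient of X^{n−k} in P_{n+k} ∈ ℤ[X] equals (−1)^k · (binomial(n, k) + binomial(n − 1, k − 1)); that is, up to alternating signs, the nonzero coefficients of the Dickson polynomials of the first kind form the (1,2)-Pascal (Lucas) triangle. -/
open Polynomial


lemma dickson_coeff_eq_zero : ∀ m j, m < j → (dickson 1 (1 : ℤ) m).coeff j = 0
  | 0, j, h => by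
    have h0 : dickson 1 (1 : ℤ) 0 = C 2 := by rw [dickson_zero]; norm_num
    rw [h0, coeff_C, if_neg (by omega)]
  | 1, j, h => by
    rw [dickson_one, coeff_X, if_neg (by omega)]
  | (m+2), j, h => by
    obtain ⟨j', rfl⟩ : ∃ j', j = j' + 1 := ⟨j - 1, by omega⟩
    rw [dickson_add_two, coeff_sub, coeff_X_mul, map_one, one_mul,
      dickson_coeff_eq_zero (m+1) j' (by omega), dickson_coeff_eq_zero m (j'+1) (by omega)]
    ring

lemma dickson_coeff_top : ∀ m, (dickson 1 (1 : ℤ) (m + 1)).coeff (m + 1) = 1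
  | 0 => by rw [dickson_one, coeff_X, if_pos rfl]
  | (m+1) => by
    rw [dickson_add_two, coeff_sub, coeff_X_mul, map_one, one_mul,
      dickson_coeff_top m, dickson_coeff_eq_zero m (m+2) (by omega)]
    ring

lemma dickson_coeff_zero : ∀ k, (dickson 1 (1 : ℤ) (2 * (k+1))).coeff 0 = 2 * (-1) ^ (k+1)
  | 0 => by
    rw [show 2 * 1 = 2 from rfl, dickson_two]
    norm_num
  | (k+1) => by
    rw [show 2 * (k+2) = 2*(k+1) + 2 by ring, dickson_add_two, coeff_sub, map_one, one_mul,
      mul_coeff_zero, coeff_X_zero, zero_mul, dickson_coeff_zero k]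
    ring

lemma dickson_coeff_aux : ∀ k e, 1 ≤ k + e → (dickson 1 (1 : ℤ) (2 * k + e)).coeff e
    = (-1) ^ k * (((k + e).choose k : ℤ) + if k = 0 then 0 else ((k + e - 1).choose (k - 1) : ℤ))
  | 0, 0, h => absurd h (by omega)
  | 0, (e+1), _ => by
    rw [show 2 * 0 + (e + 1) = e + 1 by ring, dickson_coeff_top e, if_pos rfl]
    simp
  | (k+1), 0, _ => by
    rw [show 2 * (k+1) + 0 = 2 * (k+1) by ring, dickson_coeff_zero k, if_neg (by omega)]
    rw [Nat.choose_self, Nat.choose_self]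
    push_cast; ring
  | (k+1), (e+1), _ => by
    have h1 := dickson_coeff_aux (k+1) e (by omega)
    have h2 := dickson_coeff_aux k (e+1) (by omega)
    rw [show 2 * (k+1) + (e+1) = (2*k+e+1)+2 by ring, dickson_add_two, coeff_sub, map_one,
      one_mul, coeff_X_mul, show 2*k+e+1+1 = 2*(k+1)+e by ring, h1,
      show 2*k+e+1 = 2*k+(e+1) by ring, h2]
    rcases k with _ | j
    · rw [if_pos rfl, if_neg (by omega), if_neg (by omega)]
      norm_num [Nat.choose_one_right, Nat.choose_zero_right]
      ring
    · rw [if_neg (by omega), if_neg (by omega), if_neg (by omega)]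
      rw [show j+1+1+e-1 = j+e+1 by omega, show j+1+1-1 = j+1 by omega,
        show j+1+(e+1)-1 = j+e+1 by omega, show j+1-1 = j by omega,
        show j+1+1+(e+1)-1 = j+e+2 by omega,
        show j+1+1+e = j+e+2 by omega, show j+1+(e+1) = j+e+2 by omega,
        show j+1+1+(e+1) = j+e+3 by omega]
      have p1 : (j+e+3).choose (j+2) = (j+e+2).choose (j+1) + (j+e+2).choose (j+2) :=
        Nat.choose_succ_succ _ _
      have p2 : (j+e+2).choose (j+1) = (j+e+1).choose j + (j+e+1).choose (j+1) :=
        Nat.choose_succ_succ _ _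
      push_cast [p1, p2]
      ring
  termination_by k e => (k, e)

/-- for all `n ≥ 1` and `0 ≤ k ≤ n`, the coefficient of `X^{n-k}` in the Dickson
polynomial `P_{n+k} = dickson 1 1 (n+k) ∈ ℤ[X]` equals
`(-1)^k · (binomial(n, k) + binomial(n-1, k-1))` (with the convention
`binomial(n-1, -1) = 0` when `k = 0`); i.e., up to alternating signs, the nonzero coefficients
of the Dickson polynomials of the first kind form the (1,2)-Pascal (Lucas) triangle. -/
theorem dickson_coeff_lucas_triangle (n k : ℕ) (hn : 1 ≤ n) (hk : k ≤ n) :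
    (dickson 1 (1 : ℤ) (n + k)).coeff (n - k)
      = (-1) ^ k * ((n.choose k : ℤ) + if k = 0 then 0 else ((n - 1).choose (k - 1) : ℤ)) := by
  obtain ⟨e, rfl⟩ := Nat.exists_eq_add_of_le hk
  rw [show k + e + k = 2 * k + e by ring, show k + e - k = e by omega]
  exact dickson_coeff_aux k e (by omega)
end

section
/- Let K be a field of characteristic 2, Δ ∈ K such that X² + X + Δ has no root in K, L a field extension of K, δ ∈ L with δ² + δ = Δ and L = K(δ), and σ the unique K-algebra automorphism of L with σ(δ) = δ + 1. Define ψ : K × K → L by ψ(x, y) = xδ + y and let C = {(x, y) ∈ K × K : Δx² + xy + y² = 1}. Then: (i) for all (x, y) ∈ K × K, ψ(x, y)·σ(ψ(x, y)) = 1 if and only if Δx² + xy + y² = 1; (ii) ψ restricts to a bijection from C onto {z ∈ L : z·σ(z) = 1}; (iii) ψ(0, 1) = 1 and for all (x₁, y₁), (x₂, y₂) ∈ C, ψ(x₁, y₁)·ψ(x₂, y₂) = ψ(x₁x₂ + x₁y₂ + x₂y₁, Δx₁x₂ + y₁y₂). Hence the operation (x₁,y₁) ⊕ (x₂,y₂)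 = (x₁x₂ + x₁y₂ + x₂y₁, Δx₁x₂ + y₁y₂) with neutral element (0,1) makes the Pell conic C a group isomorphic to the norm-one subgroup of Lˣ. -/
/-!
Write `ψ(a, b) = aδ + b`. Since `δ² = δ + Δ` in characteristic 2, the products of such elements
are again of this form, given by the Pell addition law, and `σ(ψ(a, b)) = ψ(a, a + b)`, so that
`ψ(a, b) σ(ψ(a, b)) = Δa² + ab + b²`. As `L = K(δ)` and `δ ∉ K`, `ψ` is a bijection `K × K ≃ L`,
which therefore matches the conic with the norm-one elements.
-/

section ArtinSchreierRoot

variable {K L : Type*}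

section CommRing

variable [CommRing K] [CommRing L] [Algebra K L] {F : Type*} [FunLike F L L] [AlgHomClass F K L L]
  {Δ : K} {δ : L}

theorem artinSchreier_mul [CharP L 2] (hδ : δ ^ 2 + δ = algebraMap K L Δ) (a₁ b₁ a₂ b₂ : K) :
    (algebraMap K L a₁ * δ + algebraMap K L b₁) * (algebraMap K L a₂ * δ + algebraMap K L b₂)
      = algebraMap K L (a₁ * a₂ + a₁ * b₂ + a₂ * b₁) * δ
          + algebraMap K L (Δ * a₁ * a₂ + b₁ * b₂) := by
  simp only [map_add, map_mul]
  linear_combination algebraMap K L a₁ * algebraMap K L a₂ * (hδ - δ * (CharTwo.two_eq_zero : (2 : L) = 0))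

theorem artinSchreier_conj (σ : F) (hσ : σ δ = δ + 1) (a b : K) :
    σ (algebraMap K L a * δ + algebraMap K L b)
      = algebraMap K L a * δ + algebraMap K L (a + b) := by
  rw [map_add, map_mul, AlgHomClass.commutes, AlgHomClass.commutes, hσ, map_add]
  ring

theorem artinSchreier_mul_conj [CharP L 2] (hδ : δ ^ 2 + δ = algebraMap K L Δ)
    (σ : F) (hσ : σ δ = δ + 1) (a b : K) :
    (algebraMap K L a * δ + algebraMap K L b) * σ (algebraMap K L a * δ + algebraMap K L b)
      = algebraMap K L (Δ * a ^ 2 + a * b + b ^ 2) := by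
  rw [artinSchreier_conj σ hσ, artinSchreier_mul hδ]
  simp only [map_add, map_mul, map_pow]
  linear_combination algebraMap K L a * (algebraMap K L a + algebraMap K L b) * δ *
    (CharTwo.two_eq_zero : (2 : L) = 0)

theorem artinSchreier_exists_eq [CharP L 2] (hδ : δ ^ 2 + δ = algebraMap K L Δ)
    (hgen : Algebra.adjoin K {δ} = ⊤) (z : L) :
    ∃ a b : K, algebraMap K L a * δ + algebraMap K L b = z := by
  have hz : z ∈ Algebra.adjoin K {δ} := hgen ▸ Algebra.mem_top
  induction hz using Algebra.adjoin_induction with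
  | mem x hx => exact ⟨1, 0, by simp [Set.mem_singleton_iff.mp hx]⟩
  | algebraMap r => exact ⟨0, r, by simp⟩
  | add x y _ _ ihx ihy =>
    obtain ⟨a₁, b₁, rfl⟩ := ihx
    obtain ⟨a₂, b₂, rfl⟩ := ihy
    exact ⟨a₁ + a₂, b₁ + b₂, by simp only [map_add]; ring⟩
  | mul x y _ _ ihx ihy =>
    obtain ⟨a₁, b₁, rfl⟩ := ihx
    obtain ⟨a₂, b₂, rfl⟩ := ihy
    exact ⟨_, _, (artinSchreier_mul hδ a₁ b₁ a₂ b₂).symm⟩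

end CommRing

section Field

variable [Field K] [CommRing L] [Nontrivial L] [Algebra K L] {Δ : K} {δ : L}

theorem artinSchreier_notMem_range [CharP K 2] (hΔ : ∀ x : K, x ^ 2 + x + Δ ≠ 0)
    (hδ : δ ^ 2 + δ = algebraMap K L Δ) : δ ∉ Set.range (algebraMap K L) := by
  rintro ⟨c, rfl⟩
  have hc : c ^ 2 + c = Δ := (algebraMap K L).injective (by rw [map_add, map_pow, hδ])
  apply hΔ c
  rw [hc, CharTwo.add_self_eq_zero]

theorem algebraMap_mul_add_algebraMap_injective (hδ : δ ∉ Set.range (algebraMap K L)) :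
    Function.Injective fun p : K × K => algebraMap K L p.1 * δ + algebraMap K L p.2 := by
  have inj := (algebraMap K L).injective
  rintro ⟨a₁, b₁⟩ ⟨a₂, b₂⟩ heq
  simp only at heq
  obtain rfl : a₁ = a₂ := by
    by_contra ha
    have hlin : algebraMap K L (a₁ - a₂) * δ = algebraMap K L (b₂ - b₁) := by
      rw [map_sub, map_sub]
      linear_combination heq
    refine hδ ⟨(a₁ - a₂)⁻¹ * (b₂ - b₁), ?_⟩
    rw [map_mul, ← hlin, ← mul_assoc, ← map_mul, inv_mul_cancel₀ (sub_ne_zero.mpr ha), map_one,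
      one_mul]
  exact Prod.ext rfl (inj (add_left_cancel heq))

end Field

end ArtinSchreierRoot

/-- let `K` be a field of characteristic 2, `Δ ∈ K` such that `X² + X + Δ` has no
root in `K`, `L = K(δ)` with `δ² + δ = Δ`, and `σ` the unique `K`-algebra automorphism of `L`
with `σ(δ) = δ + 1`.  Define `ψ(x, y) = xδ + y` and let `C` be the characteristic-2 Pell conic
`Δx² + xy + y² = 1`.  Then:
(i) `ψ(x,y)·σ(ψ(x,y)) = 1 ↔ Δx² + xy + y² = 1`;
(ii) `ψ` restricts to a bijection from `C` onto the norm-one subgroup `{z ∈ L : z·σ(z) = 1}`;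
(iii) `ψ(0,1) = 1`, and for points of `C`,
`ψ(x₁,y₁)·ψ(x₂,y₂) = ψ(x₁x₂ + x₁y₂ + x₂y₁, Δx₁x₂ + y₁y₂)`.
Hence `⊕` with neutral element `(0,1)` makes the Pell conic a group isomorphic to the norm-one
subgroup of `Lˣ`. -/
theorem pell_conic_group_law_char_two
    (K L : Type*) [Field K] [Field L] [Algebra K L] [CharP K 2]
    (Δ : K) (hΔ : ∀ x : K, x ^ 2 + x + Δ ≠ 0)
    (δ : L) (hδ : δ ^ 2 + δ = algebraMap K L Δ) (hgen : Algebra.adjoin K {δ} = ⊤)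
    (σ : L ≃ₐ[K] L) (hσ : σ δ = δ + 1) :
    (∀ x y : K,
        (algebraMap K L x * δ + algebraMap K L y) *
            σ (algebraMap K L x * δ + algebraMap K L y) = 1
          ↔ Δ * x ^ 2 + x * y + y ^ 2 = 1) ∧
    Set.BijOn (fun p : K × K => algebraMap K L p.1 * δ + algebraMap K L p.2)
      {p : K × K | Δ * p.1 ^ 2 + p.1 * p.2 + p.2 ^ 2 = 1} {z : L | z * σ z = 1} ∧
    (algebraMap K L 0 * δ + algebraMap K L 1 = 1) ∧
    (∀ x₁ y₁ x₂ y₂ : K, Δ * x₁ ^ 2 + x₁ * y₁ + y₁ ^ 2 = 1 → Δ * x₂ ^ 2 + x₂ * y₂ + y₂ ^ 2 = 1 →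
      (algebraMap K L x₁ * δ + algebraMap K L y₁) * (algebraMap K L x₂ * δ + algebraMap K L y₂)
        = algebraMap K L (x₁ * x₂ + x₁ * y₂ + x₂ * y₁) * δ
            + algebraMap K L (Δ * x₁ * x₂ + y₁ * y₂)) := by
  have : CharP L 2 := charP_of_injective_algebraMap (algebraMap K L).injective 2
  have norm_eq_one_iff : ∀ x y : K,
      (algebraMap K L x * δ + algebraMap K L y) *
          σ (algebraMap K L x * δ + algebraMap K L y) = 1
        ↔ Δ * x ^ 2 + x * y + y ^ 2 = 1 := fun x y => by
    rw [artinSchreier_mul_conj hδ σ hσ, ← map_one (algebraMap K L),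
      (algebraMap K L).injective.eq_iff]
  refine ⟨norm_eq_one_iff, ⟨fun p hp => (norm_eq_one_iff p.1 p.2).mpr hp, ?_, ?_⟩, by simp,
    fun x₁ y₁ x₂ y₂ _ _ => artinSchreier_mul hδ x₁ y₁ x₂ y₂⟩
  · exact (algebraMap_mul_add_algebraMap_injective
      (artinSchreier_notMem_range hΔ hδ)).injOn
  · intro z hz
    obtain ⟨a, b, rfl⟩ := artinSchreier_exists_eq hδ hgen z
    exact ⟨(a, b), (norm_eq_one_iff a b).mp hz, rfl⟩
end

section
/- Let K be a finite field of odd characteristic, Δ ∈ K a non-square, and α ∈ K. Then there exists β ∈ K with α² − Δβ² = 4 if and only if α² − 4 = 0 or α² − 4 is not a square in K; that is, α is the abscissa of a K-point of the Pell conic x² − Δy² = 4 exactly when α² − 4 is not a nonzero square. -/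
/-! Writing the equation as `α² - 4 = Δβ²`, the question is which elements of `K` are `Δ` times a
square. Since the nonzero squares have index two in `Kˣ`, these are exactly `0` and the non-squares. -/

theorem not_isSquare_mul_sq {K : Type*} [Field K] {Δ b : K} (hΔ : ¬ IsSquare Δ) (hb : b ≠ 0) :
    ¬ IsSquare (Δ * b ^ 2) := fun h ↦
  hΔ <| by simpa [hb] using h.div (IsSquare.sq b)

theorem FiniteField.isSquare_mul_of_not_isSquare {K : Type*} [Field K] [Fintype K] {a b : K}
    (ha : ¬ IsSquare a) (hb : ¬ IsSquare b) : IsSquare (a * b) := by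
  classical
  have hab : a * b ≠ 0 := mul_ne_zero (fun h ↦ ha (h ▸ .zero)) fun h ↦ hb (h ▸ .zero)
  refine (quadraticChar_one_iff_isSquare hab).mp ?_
  rw [map_mul, quadraticChar_neg_one_iff_not_isSquare.mpr ha,
    quadraticChar_neg_one_iff_not_isSquare.mpr hb]
  norm_num

theorem FiniteField.exists_eq_mul_sq_iff {K : Type*} [Field K] [Fintype K] {Δ : K}
    (hΔ : ¬ IsSquare Δ) (x : K) : (∃ β, x = Δ * β ^ 2) ↔ x = 0 ∨ ¬ IsSquare x := by
  constructor
  · rintro ⟨β, rfl⟩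
    rcases eq_or_ne β 0 with rfl | hβ
    · simp
    · exact .inr (not_isSquare_mul_sq hΔ hβ)
  · rintro (rfl | hx)
    · exact ⟨0, by simp⟩
    · have hΔ0 : Δ ≠ 0 := fun h ↦ hΔ (h ▸ .zero)
      obtain ⟨c, hc⟩ := isSquare_mul_of_not_isSquare hx hΔ
      refine ⟨c / Δ, ?_⟩
      field_simp
      linear_combination hc

theorem pell_conic_abscissa_iff_odd_char_general
    (K : Type*) [Field K] [Fintype K]
    (Δ : K) (hΔ : ¬ IsSquare Δ) (α : K) :
    (∃ β : K, α ^ 2 - Δ * β ^ 2 = 4) ↔ (α ^ 2 - 4 = 0 ∨ ¬ IsSquare (α ^ 2 - 4)) := by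
  rw [← FiniteField.exists_eq_mul_sq_iff hΔ]
  exact exists_congr fun β ↦ ⟨fun h ↦ by linear_combination h, fun h ↦ by linear_combination h⟩

/-- let `K` be a finite field of odd characteristic, `Δ ∈ K` a non-square and
`α ∈ K`.  Then there exists `β ∈ K` with `α² - Δβ² = 4` if and only if `α² - 4 = 0` or
`α² - 4` is not a square in `K`; i.e., `α` is the abscissa of a `K`-point of the Pell conic
`x² - Δy² = 4` exactly when `α² - 4` is not a nonzero square. -/
theorem pell_conic_abscissa_iff_odd_char
    (K : Type*) [Field K] [Fintype K] (hchar : ringChar K ≠ 2)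
    (Δ : K) (hΔ : ¬ IsSquare Δ) (α : K) :
    (∃ β : K, α ^ 2 - Δ * β ^ 2 = 4) ↔ (α ^ 2 - 4 = 0 ∨ ¬ IsSquare (α ^ 2 - 4)) :=
  pell_conic_abscissa_iff_odd_char_general K Δ hΔ α
end

section
/- Let K be a finite field of characteristic 2, Δ ∈ K with Tr_{K/𝔽₂}(Δ) = 1, and α ∈ K with α ≠ 0. Then there exists y ∈ K with Δα² + αy + y² = 1 if and only if Tr_{K/𝔽₂}(α⁻²) = 1; that is, α is the abscissa of a K-point of the characteristic-2 Pell conic Δx² + xy + y² = 1 exactly when the absolute trace of 1/α² equals 1. -/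
section ArtinSchreier

variable (K : Type*) [Field K] [Fintype K] [CharP K 2] [Algebra (ZMod 2) K]

set_option linter.unusedSectionVars false

/-- The Frobenius as a `ZMod 2`-algebra equivalence of a finite field of characteristic 2. -/
noncomputable def frobAlgEquiv : K ≃ₐ[ZMod 2] K :=
  AlgEquiv.ofBijective
    { toRingHom := frobenius K 2
      commutes' := fun c => by
        have hc : c ^ 2 = c := by revert c; decide
        show frobenius K 2 ((algebraMap (ZMod 2) K) c) = (algebraMap (ZMod 2) K) c
        rw [frobenius_def, ← map_pow, hc] }
    (Finite.injective_iff_bijective.mp (frobenius K 2).injective)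

theorem trace_sq (z : K) :
    Algebra.trace (ZMod 2) K (z ^ 2) = Algebra.trace (ZMod 2) K z := by
  have h := Algebra.trace_eq_of_algEquiv (frobAlgEquiv K) z
  have h2 : frobAlgEquiv K z = z ^ 2 := rfl
  rwa [h2] at h

/-- The Artin–Schreier additive map `z ↦ z² + z`. -/
def artinSchreierHom : K →+ K where
  toFun z := z ^ 2 + z
  map_zero' := by simp
  map_add' a b := by
    show (a + b) ^ 2 + (a + b) = a ^ 2 + a + (b ^ 2 + b)
    rw [CharTwo.add_sq]; ring

theorem artinSchreier (Δ : K) (hΔ : Algebra.trace (ZMod 2) K Δ = 1) (c : K) :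
    (∃ z : K, z ^ 2 + z = c) ↔ Algebra.trace (ZMod 2) K c = 0 := by
  set T : K →+ ZMod 2 := (Algebra.trace (ZMod 2) K).toAddMonoidHom with hT
  have hTapp : ∀ x : K, T x = Algebra.trace (ZMod 2) K x := fun _ => rfl
  set φ := artinSchreierHom K with hφ
  have hφapp : ∀ z : K, φ z = z ^ 2 + z := fun _ => rfl
  -- the range of φ is contained in the kernel of the trace
  have hle : φ.range ≤ T.ker := by
    rintro _ ⟨z, rfl⟩
    show T (z ^ 2 + z) = 0
    rw [map_add, hTapp, hTapp, trace_sq, CharTwo.add_self_eq_zero]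
  -- kernel of φ has exactly two elements
  have hkerφ : (φ.ker : Set K) = {0, 1} := by
    ext z
    simp only [SetLike.mem_coe, AddMonoidHom.mem_ker, hφapp, Set.mem_insert_iff,
      Set.mem_singleton_iff]
    constructor
    · intro h
      have hmul : z * (z + 1) = 0 := by rw [← h]; ring
      rcases mul_eq_zero.mp hmul with h1 | h1
      · exact Or.inl h1
      · refine Or.inr ?_
        have := eq_neg_of_add_eq_zero_left h1
        rwa [CharTwo.neg_eq] at this
    · rintro (rfl | rfl)
      · simp
      · rw [one_pow, CharTwo.add_self_eq_zero]
  have hcardkerφ : Nat.card φ.ker = 2 := by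
    have h1 : Nat.card φ.ker = ({0, 1} : Set K).ncard := by
      rw [← hkerφ]
      exact Nat.card_coe_set_eq _
    rw [h1, Set.ncard_pair zero_ne_one]
  -- the trace is surjective
  have hTsurj : Function.Surjective T := by
    intro x
    fin_cases x
    · exact ⟨0, map_zero T⟩
    · exact ⟨Δ, hΔ⟩
  have quot1 : Nat.card (K ⧸ φ.ker) = Nat.card φ.range :=
    Nat.card_congr (QuotientAddGroup.quotientKerEquivRange φ).toEquiv
  have quot2 : Nat.card (K ⧸ T.ker) = Nat.card T.range :=
    Nat.card_congr (QuotientAddGroup.quotientKerEquivRange T).toEquiv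
  have hcard1 : Nat.card K = Nat.card φ.range * 2 := by
    have h := AddSubgroup.card_eq_card_quotient_mul_card_addSubgroup (φ.ker)
    rwa [quot1, hcardkerφ] at h
  have hrangeT : Nat.card T.range = 2 := by
    have hr : T.range = ⊤ := (AddSubgroup.eq_top_iff' T.range).mpr fun x => hTsurj x
    rw [hr, AddSubgroup.card_top, Nat.card_zmod]
  have hcard2 : Nat.card K = 2 * Nat.card T.ker := by
    have h := AddSubgroup.card_eq_card_quotient_mul_card_addSubgroup (T.ker)
    rwa [quot2, hrangeT] at h
  have hKpos : 0 < Nat.card K := Nat.card_pos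
  have heq : φ.range = T.ker := by
    refine AddSubgroup.eq_of_le_of_card_ge hle ?_
    omega
  constructor
  · rintro ⟨z, hz⟩
    have hcmem : c ∈ φ.range := ⟨z, hz⟩
    rw [heq] at hcmem
    exact hcmem
  · intro hc
    have hcmem : c ∈ φ.range := by rw [heq]; exact hc
    obtain ⟨z, hz⟩ := hcmem
    exact ⟨z, hz⟩

end ArtinSchreier

/-- let `K` be a finite field of characteristic 2, `Δ ∈ K` with absolute trace
`Tr_{K/𝔽₂}(Δ) = 1`, and `α ∈ K` with `α ≠ 0`.  Then there exists `y ∈ K` with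
`Δα² + αy + y² = 1` if and only if `Tr_{K/𝔽₂}(α⁻²) = 1`; i.e., `α` is the abscissa of a
`K`-point of the characteristic-2 Pell conic `Δx² + xy + y² = 1` exactly when the absolute
trace of `1/α²` equals `1`. -/
theorem pell_conic_abscissa_iff_char_two
    (K : Type*) [Field K] [Fintype K] [CharP K 2] [Algebra (ZMod 2) K]
    (Δ : K) (hΔ : Algebra.trace (ZMod 2) K Δ = 1)
    (α : K) (hα : α ≠ 0) :
    (∃ y : K, Δ * α ^ 2 + α * y + y ^ 2 = 1) ↔ Algebra.trace (ZMod 2) K (α ^ 2)⁻¹ = 1 := by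
  have hα2 : α ^ 2 ≠ 0 := pow_ne_zero 2 hα
  have h2K : (2 : K) = 0 := CharTwo.two_eq_zero
  have key : (∃ y : K, Δ * α ^ 2 + α * y + y ^ 2 = 1) ↔
      (∃ z : K, z ^ 2 + z = (α ^ 2)⁻¹ + Δ) := by
    constructor
    · rintro ⟨y, hy⟩
      refine ⟨y * α⁻¹, ?_⟩
      apply mul_left_cancel₀ hα2
      have h1 : α ^ 2 * (y * α⁻¹) ^ 2 = y ^ 2 := by field_simp
      have h2 : α ^ 2 * (y * α⁻¹) = α * y := by field_simp
      rw [mul_add, h1, h2, mul_add, mul_inv_cancel₀ hα2]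
      linear_combination hy - α ^ 2 * Δ * h2K
    · rintro ⟨z, hz⟩
      refine ⟨α * z, ?_⟩
      have h : α ^ 2 * (z ^ 2 + z) = α ^ 2 * ((α ^ 2)⁻¹ + Δ) := by rw [hz]
      rw [mul_add, mul_add, mul_inv_cancel₀ hα2] at h
      linear_combination h + α ^ 2 * Δ * h2K
  rw [key, artinSchreier K Δ hΔ, map_add, hΔ]
  generalize Algebra.trace (ZMod 2) K (α ^ 2)⁻¹ = t
  revert t; decide
end

section
/- Let K be a field, ℓ ≥ 1, f ∈ K[Y] monic of degree ℓ, g ∈ K[Y] with deg g < ℓ and f, g coprime. Then for every n ≥ 1 and every Q ∈ K[Y] with deg Q < ℓ·n, there exist unique polynomials p₀, …, p_{n−1} ∈ K[Y], each of degree < ℓ, such that Q = Σ_{i=0}^{n−1} p_i · f^i · g^{n−1−i}. (Correctness of the rational-function decomposition underlying the push operation.) -/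
open Polynomial

lemma aux_deg {K : Type*} [Field K] {ℓ n : ℕ} (hℓ : 1 ≤ ℓ) {f g : Polynomial K}
    (hf : f.Monic) (hfdeg : f.natDegree = ℓ) (hgdeg : g.degree < (ℓ : ℕ))
    {p : Polynomial K} (hp : p.degree < (ℓ : ℕ)) {i k : ℕ} (h : i + k + 1 ≤ n) :
    (p * f ^ i * g ^ k).degree < ((ℓ * n : ℕ) : WithBot ℕ) := by
  by_cases h0 : p * f ^ i * g ^ k = 0
  · rw [h0, degree_zero]; exact WithBot.bot_lt_coe _
  · have hp0 : p ≠ 0 := by rintro rfl; simp at h0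
    have hgk : g ^ k ≠ 0 := by intro hh; rw [hh, mul_zero] at h0; exact h0 rfl
    rw [← natDegree_lt_iff_degree_lt h0]
    have h1 : p.natDegree ≤ ℓ - 1 := by
      have := (natDegree_lt_iff_degree_lt hp0).mpr hp; omega
    have h2 : (f ^ i).natDegree = i * ℓ := by rw [natDegree_pow, hfdeg]
    have h3 : (g ^ k).natDegree ≤ k * (ℓ - 1) := by
      by_cases hg : g = 0
      · subst hg
        rcases Nat.eq_zero_or_pos k with rfl | hk
        · simp
        · simp [zero_pow hk.ne'] at hgk
      · rw [natDegree_pow]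
        have := (natDegree_lt_iff_degree_lt hg).mpr hgdeg
        exact Nat.mul_le_mul_left k (by omega)
    rw [natDegree_mul (mul_ne_zero hp0 (pow_ne_zero _ hf.ne_zero)) hgk,
      natDegree_mul hp0 (pow_ne_zero _ hf.ne_zero), h2]
    calc p.natDegree + i * ℓ + (g ^ k).natDegree
        ≤ (ℓ - 1) + i * ℓ + k * (ℓ - 1) := by omega
      _ ≤ (ℓ - 1) + i * ℓ + k * ℓ :=
          Nat.add_le_add_left (Nat.mul_le_mul_left k (by omega)) _
      _ = ℓ * (i + k + 1) - 1 := by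
          have : 1 ≤ ℓ * (i + k + 1) := Nat.one_le_iff_ne_zero.mpr (by positivity)
          ring_nf; omega
      _ < ℓ * n := by
          have h4 := Nat.mul_le_mul_left ℓ h
          have : 1 ≤ ℓ * (i + k + 1) := Nat.one_le_iff_ne_zero.mpr (by positivity)
          omega

lemma aux_sum_deg {K : Type*} [Field K] {ℓ : ℕ} (hℓ : 1 ≤ ℓ) {f g : Polynomial K}
    (hf : f.Monic) (hfdeg : f.natDegree = ℓ) (hgdeg : g.degree < (ℓ : ℕ))
    (n : ℕ) (p : Fin n → Polynomial K) (hp : ∀ i, (p i).degree < (ℓ : ℕ)) :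
    (∑ i : Fin n, p i * f ^ (i : ℕ) * g ^ (n - 1 - (i : ℕ))).degree
      < ((ℓ * n : ℕ) : WithBot ℕ) := by
  refine lt_of_le_of_lt (degree_sum_le _ _) ?_
  rw [Finset.sup_lt_iff (WithBot.bot_lt_coe _)]
  intro i _
  exact aux_deg hℓ hf hfdeg hgdeg (hp i) (by omega : (i : ℕ) + (n - 1 - (i : ℕ)) + 1 ≤ n)

lemma aux_inj {K : Type*} [Field K] {ℓ : ℕ} {f g : Polynomial K}
    (hf : f.Monic) (hfdeg : f.natDegree = ℓ) (hcop : IsCoprime f g) :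
    ∀ n : ℕ, ∀ p : Fin n → Polynomial K, (∀ i, (p i).degree < (ℓ : ℕ)) →
      (∑ i : Fin n, p i * f ^ (i : ℕ) * g ^ (n - 1 - (i : ℕ))) = 0 → ∀ i, p i = 0 := by
  intro n
  induction n with
  | zero => intro p _ _ i; exact i.elim0
  | succ n ih =>
      intro p hp hsum
      rw [Fin.sum_univ_succ] at hsum
      simp only [Fin.val_zero, pow_zero, mul_one, Fin.val_succ] at hsum
      have hre : ∀ i : Fin n, i ∈ Finset.univ →
          p i.succ * f ^ ((i : ℕ) + 1) * g ^ (n + 1 - 1 - ((i : ℕ) + 1)) =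
          f * (p i.succ * f ^ (i : ℕ) * g ^ (n - 1 - (i : ℕ))) := by
        intro i _
        have h : n + 1 - 1 - ((i : ℕ) + 1) = n - 1 - (i : ℕ) := by omega
        rw [h, pow_succ]; ring
      rw [Finset.sum_congr rfl hre, ← Finset.mul_sum] at hsum
      set S := ∑ i : Fin n, p i.succ * f ^ (i : ℕ) * g ^ (n - 1 - (i : ℕ)) with hS
      have hdvd : f ∣ p 0 * g ^ (n + 1 - 1 - 0) := ⟨-S, by linear_combination hsum⟩
      have hp0 : p 0 = 0 := by
        refine eq_zero_of_dvd_of_degree_lt ((hcop.pow_right).dvd_of_dvd_mul_right hdvd) ?_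
        rw [degree_eq_natDegree hf.ne_zero, hfdeg]
        exact hp 0
      rw [hp0, zero_mul, zero_add] at hsum
      have hS0 : S = 0 := (mul_eq_zero.mp hsum).resolve_left hf.ne_zero
      have hall := ih (fun i => p i.succ) (fun i => hp i.succ) hS0
      intro i
      refine Fin.cases hp0 (fun j => hall j) i

/-- let `K` be a field, `ℓ ≥ 1`, `f ∈ K[Y]` monic of degree `ℓ`, `g ∈ K[Y]` with
`deg g < ℓ` and `f, g` coprime.  Then for every `n ≥ 1` and every `Q ∈ K[Y]` with
`deg Q < ℓ·n`, there exist unique polynomials `p₀, …, p_{n-1} ∈ K[Y]`, each of degree `< ℓ`,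
such that `Q = Σ_{i=0}^{n-1} pᵢ · f^i · g^{n-1-i}`  (correctness of the rational-function
decomposition underlying the push operation). -/
theorem exists_unique_homogeneous_decomposition
    (K : Type*) [Field K] (ℓ : ℕ) (hℓ : 1 ≤ ℓ)
    (f g : Polynomial K) (hf : f.Monic) (hfdeg : f.natDegree = ℓ)
    (hgdeg : g.degree < (ℓ : ℕ)) (hcop : IsCoprime f g) :
    ∀ n : ℕ, 1 ≤ n → ∀ Q : Polynomial K, Q.degree < (ℓ * n : ℕ) →
      ∃! p : Fin n → Polynomial K,
        (∀ i, (p i).degree < (ℓ : ℕ)) ∧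
        Q = ∑ i : Fin n, p i * f ^ (i : ℕ) * g ^ (n - 1 - (i : ℕ)) := by
  intro n hn Q hQ
  -- the linear map
  let φ : (Fin n → degreeLT K ℓ) →ₗ[K] degreeLT K (ℓ * n) :=
    { toFun := fun p => ⟨∑ i : Fin n, (p i : Polynomial K) * f ^ (i : ℕ) * g ^ (n - 1 - (i : ℕ)),
        mem_degreeLT.mpr (aux_sum_deg hℓ hf hfdeg hgdeg n _
          (fun i => mem_degreeLT.mp (p i).2))⟩
      map_add' := by
        intro p q
        apply Subtype.ext
        simp [add_mul, Finset.sum_add_distrib]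
      map_smul' := by
        intro c p
        apply Subtype.ext
        simp [Finset.smul_sum, smul_mul_assoc] }
  have hinj : Function.Injective φ := by
    rw [injective_iff_map_eq_zero]
    intro p hp
    have h0 : (∑ i : Fin n, (p i : Polynomial K) * f ^ (i : ℕ) * g ^ (n - 1 - (i : ℕ))) = 0 :=
      congrArg Subtype.val hp
    have := aux_inj hf hfdeg hcop n (fun i => (p i : Polynomial K))
      (fun i => mem_degreeLT.mp (p i).2) h0
    funext i
    exact Subtype.ext (this i)
  have fd : ∀ m : ℕ, FiniteDimensional K (degreeLT K m) := fun m =>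
    Module.Finite.equiv (degreeLTEquiv K m).symm
  have hr : ∀ m : ℕ, Module.finrank K (degreeLT K m) = m := fun m => by
    haveI := fd m
    rw [(degreeLTEquiv K m).finrank_eq, Module.finrank_pi]
    simp
  haveI := fd ℓ
  haveI := fd (ℓ * n)
  have hrank : Module.finrank K (Fin n → degreeLT K ℓ)
      = Module.finrank K (degreeLT K (ℓ * n)) := by
    rw [Module.finrank_pi_fintype, hr, hr]
    simp [mul_comm]
  have hsurj : Function.Surjective φ :=
    (LinearMap.injective_iff_surjective_of_finrank_eq_finrank hrank).mp hinj
  obtain ⟨p, hp⟩ := hsurj ⟨Q, mem_degreeLT.mpr hQ⟩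
  refine ⟨fun i => (p i : Polynomial K), ⟨fun i => mem_degreeLT.mp (p i).2, ?_⟩, ?_⟩
  · exact (congrArg Subtype.val hp).symm
  · rintro q ⟨hq1, hq2⟩
    have : φ (fun i => ⟨q i, mem_degreeLT.mpr (hq1 i)⟩) = ⟨Q, mem_degreeLT.mpr hQ⟩ :=
      Subtype.ext hq2.symm
    have heq := hinj (this.trans hp.symm)
    funext i
    exact congrArg Subtype.val (congrFun heq i)
end

section
/- For all n ≥ 1 and all k with 2k + 2 ≤ n, the coefficients of P_n ∈ ℤ[X] satisfy (n − k − 1)·(k + 1)·coeff(P_n, n − 2k − 2) = −(n − 2k)·(n − 2k − 1)·coeff(P_n, n − 2k); that is, consecutive nonzero coefficients of the Dickson polynomial of the first kind are related by the ratio −(n−2k)(n−2k−1)/((n−k−1)(k+1)). -/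
/-!
The Dickson polynomial `P_n(x) = 2 T_n(x / 2)` inherits from the Chebyshev equation
`(1 - x²) T_n'' = x T_n' - n² T_n` the differential equation `(4 - x²) P_n'' = x P_n' - n² P_n`.
Comparing coefficients of `x^m` gives `4 (m + 2) (m + 1) a_{m+2} = (m² - n²) a_m`, and at
`m = n - 2k - 2` the factor `m² - n²` is `-4 (k + 1) (n - k - 1)`.
-/

open Polynomial

namespace Polynomial

variable {R : Type*} [CommRing R]

theorem coeff_add_two_of_four_sub_X_sq_mul_derivative_derivative {f : R[X]} {c : R}
    (h : (4 - X ^ 2) * derivative^[2] f = X * derivative f - C c * f) (m : ℕ) :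
    4 * ((m + 2) * (m + 1)) * f.coeff (m + 2) = (m ^ 2 - c) * f.coeff m := by
  have hm := congrArg (coeff · m) h
  simp only [sub_mul, coeff_sub, coeff_C_mul, coeff_ofNat_mul, coeff_X_pow_mul',
    coeff_iterate_derivative, Nat.descFactorial, nsmul_eq_mul] at hm
  rcases m with _ | _ | m
  · simp only [mul_coeff_zero, coeff_X_zero, zero_mul] at hm
    norm_num at hm ⊢
    linear_combination hm
  · simp only [coeff_X_mul, coeff_derivative] at hm
    norm_num at hm ⊢
    linear_combination hm
  · simp only [coeff_X_mul, coeff_derivative, Nat.le_add_left, if_true] at hm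
    push_cast at hm ⊢
    linear_combination hm

namespace Chebyshev

/-- Obtained from the equation for `T R n` through `(C R n).comp (2 * X) = 2 * T R n`;
composing with `2 * X` is injective because `2` is not a zero divisor. -/
theorem four_sub_X_sq_mul_derivative_derivative_C_eq_poly_in_C
    (h2 : (2 : R) ∈ nonZeroDivisors R) (n : ℤ) :
    (4 - X ^ 2) * derivative^[2] (C R n) = X * derivative (C R n) - (n : R[X]) ^ 2 * C R n := by
  have hC := C_comp_two_mul_X R n
  have hC' := congrArg derivative hC
  have hC'' := congrArg derivative hC'
  have hT := one_sub_X_sq_mul_derivative_derivative_T_eq_poly_in_T (R := R) n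
  simp only [derivative_comp, derivative_mul, derivative_ofNat, derivative_X, zero_mul, zero_add,
    mul_one] at hC' hC''
  rw [← sub_eq_zero, ← comp_C_mul_X_eq_zero_iff h2]
  simp only [sub_comp, mul_comp, pow_comp, X_comp, intCast_comp, ofNat_comp, C_ofNat]
  simp only [Function.iterate_succ, Function.iterate_zero, Function.comp_apply, id] at hT ⊢
  linear_combination (1 - X ^ 2) * hC'' - X * hC' + 2 * hT + (n : R[X]) ^ 2 * hC

end Chebyshev

end Polynomial

theorem dickson_coeff_ratio_general (n k : ℕ) (hk : 2 * k + 2 ≤ n) :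
    ((n : ℤ) - k - 1) * ((k : ℤ) + 1) * (dickson 1 (1 : ℤ) n).coeff (n - 2 * k - 2)
      = -(((n : ℤ) - 2 * k) * ((n : ℤ) - 2 * k - 1)) * (dickson 1 (1 : ℤ) n).coeff (n - 2 * k) := by
  have hode := Chebyshev.four_sub_X_sq_mul_derivative_derivative_C_eq_poly_in_C
    (mem_nonZeroDivisors_of_ne_zero (two_ne_zero' ℤ)) n
  rw [← dickson_one_one_eq_chebyshev_C, ← C_eq_intCast, ← C_pow] at hode
  obtain ⟨m, rfl⟩ := Nat.exists_eq_add_of_le hk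
  have hrec := coeff_add_two_of_four_sub_X_sq_mul_derivative_derivative hode m
  rw [show 2 * k + 2 + m - 2 * k - 2 = m by omega, show 2 * k + 2 + m - 2 * k = m + 2 by omega]
  refine mul_left_cancel₀ (four_ne_zero' ℤ) ?_
  push_cast at hrec ⊢
  linear_combination hrec

/-- for all `n ≥ 1` and all `k` with `2k + 2 ≤ n`, the coefficients of the
Dickson polynomial `P_n = dickson 1 1 n ∈ ℤ[X]` satisfy
`(n - k - 1)·(k + 1)·coeff(P_n, n - 2k - 2) = -(n - 2k)·(n - 2k - 1)·coeff(P_n, n - 2k)`;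
that is, consecutive nonzero coefficients are related by the ratio
`-(n-2k)(n-2k-1)/((n-k-1)(k+1))`. -/
theorem dickson_coeff_ratio (n k : ℕ) (hn : 1 ≤ n) (hk : 2 * k + 2 ≤ n) :
    ((n : ℤ) - k - 1) * ((k : ℤ) + 1) * (dickson 1 (1 : ℤ) n).coeff (n - 2 * k - 2)
      = -(((n : ℤ) - 2 * k) * ((n : ℤ) - 2 * k - 1)) * (dickson 1 (1 : ℤ) n).coeff (n - 2 * k) :=
  dickson_coeff_ratio_general n k hk
end
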